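/- arXiv:1510.02978 — 5 statements merged into one kernel-verified Lean document; each statement's English description precedes it below -/
import Mathlib

section
/- Let I₁, I₂, I₃, l > 0, h ∈ ℝ, and set δ = I₁/I₂ − 1, γ = I₁/I₃ − 1, ρ = h/l, ρ̂ = ρ(1+δ). Let θ, ψ ∈ ℝ with cos θ ≠ 0, and let v = (v₁,v₂,v₃) ∈ ℝ³. Then the linear system l·(cos θ cos ψ, −cos θ sin ψ, sin θ)ᵀ − (0,h,0)ᵀ = diag(I₁,I₂,I₃)·M(θ,ψ)·(l/I₁)·v, where M(θ,ψ) has rows (cos θ cos ψ, sin ψ, 0), (−cos θ sin ψ, cos ψ, 0), (sin θ, 0, 1), holds if and only if v₁ = 1 + δ sin²ψ + ρ̂ sec θ sin ψ, v₂ = −δ cos θ cos ψ sin ψ − ρ̂ cos ψ, and v₃ = γ sin θ − δ sin θ sin²ψ − ρ̂ tan θ sin ψ. -/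
open Real Matrix

/-- The matrix `M(θ, ψ)` relating the body angular velocity to the Euler angle rates. -/
noncomputable def Mmat (θ ψ : ℝ) : Matrix (Fin 3) (Fin 3) ℝ :=
  !![Real.cos θ * Real.cos ψ, Real.sin ψ, 0;
     -(Real.cos θ * Real.sin ψ), Real.cos ψ, 0;
     Real.sin θ, 0, 1]

/-!
Both matrices on the right are invertible: the inertia tensor trivially, and `M(θ, ψ)` because
its determinant is `cos θ ≠ 0`. Hence the equation is equivalent to `v = M(θ, ψ)⁻¹ w`, where
`w = (I₁ / l) · diag(I₁, I₂, I₃)⁻¹ (L - (0, h, 0))`, with `L` the body angular momentum, is the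
scaled body angular velocity; writing out `M(θ, ψ)⁻¹ = adj M(θ, ψ) / cos θ`
and using `sin² ψ + cos² ψ = 1` gives the three formulas.
-/

theorem Matrix.mulVec_eq_iff_eq_mulVec_of_mul_eq_one {n R : Type*} [Fintype n] [DecidableEq n]
    [CommRing R] {M N : Matrix n n R} (hNM : N * M = 1) {v w : n → R} :
    M *ᵥ v = w ↔ v = N *ᵥ w := by
  constructor
  · rintro rfl
    rw [mulVec_mulVec, hNM, one_mulVec]
  · rintro rfl
    rw [mulVec_mulVec, mul_eq_one_comm.mp hNM, one_mulVec]

theorem Matrix.diagonal_mulVec_eq_iff {n K : Type*} [Fintype n] [DecidableEq n] [Field K]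
    {d : n → K} (hd : ∀ i, d i ≠ 0) {v w : n → K} :
    diagonal d *ᵥ v = w ↔ v = diagonal d⁻¹ *ᵥ w := by
  refine mulVec_eq_iff_eq_mulVec_of_mul_eq_one ?_
  rw [diagonal_mul_diagonal, ← diagonal_one]
  congr 1
  ext i
  exact inv_mul_cancel₀ (hd i)

/-- The adjugate of `Mmat θ ψ` divided by its determinant `cos θ`. -/
noncomputable def MmatInv (θ ψ : ℝ) : Matrix (Fin 3) (Fin 3) ℝ :=
  (Real.cos θ)⁻¹ • !![Real.cos ψ, -Real.sin ψ, 0;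
    Real.cos θ * Real.sin ψ, Real.cos θ * Real.cos ψ, 0;
    -(Real.sin θ * Real.cos ψ), Real.sin θ * Real.sin ψ, Real.cos θ]

theorem MmatInv_mul_Mmat {θ : ℝ} (hcos : Real.cos θ ≠ 0) (ψ : ℝ) :
    MmatInv θ ψ * Mmat θ ψ = 1 := by
  ext i j
  fin_cases i <;> fin_cases j <;>
    simp [MmatInv, Mmat, Matrix.mul_apply, Fin.sum_univ_three] <;> field_simp <;>
    grind [Real.sin_sq_add_cos_sq]

theorem inv_smul_diagonal_inv_mulVec_sub_rotor {I₁ l : ℝ} (hI₁ : I₁ ≠ 0) (hl : l ≠ 0)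
    (I₂ I₃ h a₀ a₁ a₂ : ℝ) :
    (l / I₁)⁻¹ • (diagonal ![I₁, I₂, I₃]⁻¹ *ᵥ (l • ![a₀, a₁, a₂] - ![0, h, 0]))
      = ![a₀, I₁ / I₂ * (a₁ - h / l), I₁ / I₃ * a₂] := by
  ext i
  fin_cases i <;> simp [mulVec_diagonal, vecHead, vecTail] <;> field_simp

theorem MmatInv_mulVec_scaledAngularVelocity {θ : ℝ} (hcos : Real.cos θ ≠ 0) (ψ δ γ ρh : ℝ) :
    MmatInv θ ψ *ᵥ ![Real.cos θ * Real.cos ψ, -(1 + δ) * (Real.cos θ * Real.sin ψ) - ρh,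
        (1 + γ) * Real.sin θ]
      = ![1 + δ * Real.sin ψ ^ 2 + ρh * (Real.cos θ)⁻¹ * Real.sin ψ,
          -δ * Real.cos θ * Real.cos ψ * Real.sin ψ - ρh * Real.cos ψ,
          γ * Real.sin θ - δ * Real.sin θ * Real.sin ψ ^ 2 - ρh * Real.tan θ * Real.sin ψ] := by
  ext i
  fin_cases i <;> simp [MmatInv, mulVec, dotProduct, Fin.sum_univ_three, Real.tan_eq_sin_div_cos] <;>
    field_simp <;> grind [Real.sin_sq_add_cos_sq]

theorem scaled_euler_equations_with_rotor
    (I₁ I₂ I₃ l h : ℝ) (hI₁ : 0 < I₁) (hI₂ : 0 < I₂) (hI₃ : 0 < I₃) (hl : 0 < l)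
    (δ γ ρ ρh : ℝ)
    (hδ : δ = I₁ / I₂ - 1) (hγ : γ = I₁ / I₃ - 1) (hρ : ρ = h / l) (hρh : ρh = ρ * (1 + δ))
    (θ ψ : ℝ) (hcos : Real.cos θ ≠ 0) (v : Fin 3 → ℝ) :
    (l • ![Real.cos θ * Real.cos ψ, -(Real.cos θ * Real.sin ψ), Real.sin θ]
        - ![0, h, 0]
      = (Matrix.diagonal ![I₁, I₂, I₃]).mulVec ((Mmat θ ψ).mulVec ((l / I₁) • v)))
    ↔ (v 0 = 1 + δ * Real.sin ψ ^ 2 + ρh * (Real.cos θ)⁻¹ * Real.sin ψ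
        ∧ v 1 = -δ * Real.cos θ * Real.cos ψ * Real.sin ψ - ρh * Real.cos ψ
        ∧ v 2 = γ * Real.sin θ - δ * Real.sin θ * Real.sin ψ ^ 2
            - ρh * Real.tan θ * Real.sin ψ) := by
  have hinertia : ∀ i, ![I₁, I₂, I₃] i ≠ 0 := by
    simp [Fin.forall_fin_succ, hI₁.ne', hI₂.ne', hI₃.ne']
  have hrate : ![Real.cos θ * Real.cos ψ, I₁ / I₂ * (-(Real.cos θ * Real.sin ψ) - h / l),
      I₁ / I₃ * Real.sin θ]
      = ![Real.cos θ * Real.cos ψ, -(1 + δ) * (Real.cos θ * Real.sin ψ) - ρh,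
        (1 + γ) * Real.sin θ] := by
    rw [hρh, hρ, hδ, hγ, add_sub_cancel, add_sub_cancel]
    congr 2
    ring
  rw [eq_comm, diagonal_mulVec_eq_iff hinertia, mulVec_smul,
    ← eq_inv_smul_iff₀ (div_ne_zero hl.ne' hI₁.ne'),
    inv_smul_diagonal_inv_mulVec_sub_rotor hI₁.ne' hl.ne',
    mulVec_eq_iff_eq_mulVec_of_mul_eq_one (MmatInv_mul_Mmat hcos ψ), hrate,
    MmatInv_mulVec_scaledAngularVelocity hcos]
  simp [funext_iff, Fin.forall_fin_succ]
end

section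
/- Let δ, γ, ρ, ρ̂ ∈ ℝ and let θ, ψ : ℝ → ℝ be differentiable functions with cos θ(τ) ≠ 0 for all τ, satisfying θ'(τ) = −δ cos θ cos ψ sin ψ − ρ̂ cos ψ and ψ'(τ) = γ sin θ − δ sin θ sin²ψ − ρ̂ tan θ sin ψ. Then the function E(τ) = ½(1 + γ sin²θ(τ) + δ cos²θ(τ) sin²ψ(τ)) + ½ρ̂(ρ + 2 cos θ(τ) sin ψ(τ)) is constant. -/
/-!
With `c = cos θ`, the equations of motion are Hamilton's equations for the energy `E(θ, ψ)`
up to the conformal factor `1 / c`: `θ' = -(∂E/∂ψ) / c` and `ψ' = (∂E/∂θ) / c`. Along a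
solution, `dE/dτ = (∂E/∂θ) θ' + (∂E/∂ψ) ψ'` therefore vanishes, and `E` is constant.
-/

open Real

noncomputable section

namespace RigidBodyWithRotor

variable (δ γ ρ ρh : ℝ)

def energy (θ ψ : ℝ) : ℝ :=
  (1 / 2) * (1 + γ * sin θ ^ 2 + δ * cos θ ^ 2 * sin ψ ^ 2)
    + (1 / 2) * ρh * (ρ + 2 * cos θ * sin ψ)

def energyDerivθ (θ ψ : ℝ) : ℝ :=
  γ * sin θ * cos θ - δ * cos θ * sin θ * sin ψ ^ 2 - ρh * sin θ * sin ψ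

def energyDerivψ (θ ψ : ℝ) : ℝ :=
  δ * cos θ ^ 2 * sin ψ * cos ψ + ρh * cos θ * cos ψ

theorem hasDerivAt_energy_comp {θ ψ : ℝ → ℝ} {θ' ψ' τ : ℝ}
    (hθ : HasDerivAt θ θ' τ) (hψ : HasDerivAt ψ ψ' τ) :
    HasDerivAt (fun t => energy δ γ ρ ρh (θ t) (ψ t))
      (energyDerivθ δ γ ρh (θ τ) (ψ τ) * θ' + energyDerivψ δ ρh (θ τ) (ψ τ) * ψ') τ := by
  have hsinθ := hθ.sin
  have hcosθ := hθ.cos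
  have hsinψ := hψ.sin
  have h := ((((hsinθ.fun_pow 2).const_mul γ).const_add 1).fun_add
      (((hcosθ.fun_pow 2).const_mul δ).fun_mul (hsinψ.fun_pow 2))).const_mul (1 / 2) |>.fun_add
      ((((hcosθ.const_mul 2).fun_mul hsinψ).const_add ρ).const_mul ((1 / 2) * ρh))
  refine h.congr_deriv ?_
  simp only [energyDerivθ, energyDerivψ]
  ring

variable {δ γ ρh}

theorem tilt_rate_eq_neg_energyDerivψ_div_cos {θ ψ : ℝ} (hcos : cos θ ≠ 0) :
    -δ * cos θ * cos ψ * sin ψ - ρh * cos ψ = -energyDerivψ δ ρh θ ψ / cos θ := by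
  rw [energyDerivψ]
  field_simp
  ring

theorem twist_rate_eq_energyDerivθ_div_cos {θ ψ : ℝ} (hcos : cos θ ≠ 0) :
    γ * sin θ - δ * sin θ * sin ψ ^ 2 - ρh * tan θ * sin ψ
      = energyDerivθ δ γ ρh θ ψ / cos θ := by
  rw [energyDerivθ, tan_eq_sin_div_cos]
  field_simp

end RigidBodyWithRotor

end

open RigidBodyWithRotor in
theorem energy_conserved_rigid_body_with_rotor
    (δ γ ρ ρh : ℝ) (θ ψ : ℝ → ℝ)
    (hθd : Differentiable ℝ θ) (hψd : Differentiable ℝ ψ)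
    (hcos : ∀ τ, Real.cos (θ τ) ≠ 0)
    (hθ' : ∀ τ, deriv θ τ =
      -δ * Real.cos (θ τ) * Real.cos (ψ τ) * Real.sin (ψ τ) - ρh * Real.cos (ψ τ))
    (hψ' : ∀ τ, deriv ψ τ =
      γ * Real.sin (θ τ) - δ * Real.sin (θ τ) * Real.sin (ψ τ) ^ 2
        - ρh * Real.tan (θ τ) * Real.sin (ψ τ)) :
    ∀ τ₁ τ₂ : ℝ,
      (1 / 2) * (1 + γ * Real.sin (θ τ₁) ^ 2
          + δ * Real.cos (θ τ₁) ^ 2 * Real.sin (ψ τ₁) ^ 2)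
        + (1 / 2) * ρh * (ρ + 2 * Real.cos (θ τ₁) * Real.sin (ψ τ₁))
      = (1 / 2) * (1 + γ * Real.sin (θ τ₂) ^ 2
          + δ * Real.cos (θ τ₂) ^ 2 * Real.sin (ψ τ₂) ^ 2)
        + (1 / 2) * ρh * (ρ + 2 * Real.cos (θ τ₂) * Real.sin (ψ τ₂)) := by
  have hE : ∀ τ, HasDerivAt (fun t => energy δ γ ρ ρh (θ t) (ψ t)) 0 τ := fun τ => by
    have h := hasDerivAt_energy_comp δ γ ρ ρh (hθd τ).hasDerivAt (hψd τ).hasDerivAt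
    rw [hθ', hψ', tilt_rate_eq_neg_energyDerivψ_div_cos (hcos τ),
      twist_rate_eq_energyDerivθ_div_cos (hcos τ)] at h
    convert h using 1
    ring
  exact is_const_of_deriv_eq_zero (fun τ => (hE τ).differentiableAt) (fun τ => (hE τ).deriv)
end

section
/- Let γ, δ, ρ ∈ ℝ and let θ̃, ψ̃ : ℝ → ℝ be differentiable functions satisfying θ̃' = γ cos θ̃ sin ψ̃ cos ψ̃ and ψ̃' = −(1+δ)ρ + sin θ̃·(γ sin²ψ̃ − δ). Then the function Ẽ(τ) = ½·( (1 + γ sin²ψ̃(τ))·cos²θ̃(τ) + (1+δ)·(ρ + sin θ̃(τ))² ) is constant. In particular, along the solution with θ̃(0) = ψ̃(0) = 0 the constant value is Ẽ = ½(1 + ρ·ρ̂) with ρ̂ = ρ(1+δ). -/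
/-!
Writing `Θ = γ cos θ sin ψ cos ψ` (`tiltField`) and `Ψ = -(1+δ)ρ + sin θ (γ sin² ψ - δ)`
(`twistField`) for the right-hand sides, the partial derivatives of `Ẽ` are
`∂Ẽ/∂ψ = cos θ · Θ` and `∂Ẽ/∂θ = -cos θ · Ψ`, so `Ẽ` is a Hamiltonian of the system up to the
factor `cos θ`. Along a solution `dẼ/dτ = cos θ · (Θ Ψ - Ψ Θ) = 0`, and the value at
`θ = ψ = 0` is `(1 + ρ²(1+δ))/2`.
-/

open Real

namespace AlternateEuler

noncomputable def energy (γ δ ρ θ ψ : ℝ) : ℝ :=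
  (1 / 2) * ((1 + γ * sin ψ ^ 2) * cos θ ^ 2 + (1 + δ) * (ρ + sin θ) ^ 2)

noncomputable def tiltField (γ θ ψ : ℝ) : ℝ :=
  γ * cos θ * sin ψ * cos ψ

noncomputable def twistField (γ δ ρ θ ψ : ℝ) : ℝ :=
  -(1 + δ) * ρ + sin θ * (γ * sin ψ ^ 2 - δ)

theorem hasDerivAt_energy_comp {γ δ ρ θ' ψ' τ : ℝ} {θ ψ : ℝ → ℝ}
    (hθ : HasDerivAt θ θ' τ) (hψ : HasDerivAt ψ ψ' τ) :
    HasDerivAt (fun t => energy γ δ ρ (θ t) (ψ t))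
      (cos (θ τ) * (tiltField γ (θ τ) (ψ τ) * ψ' - twistField γ δ ρ (θ τ) (ψ τ) * θ')) τ := by
  have h := (((((hψ.sin.fun_pow 2).const_mul γ).const_add 1).fun_mul (hθ.cos.fun_pow 2)).fun_add
    (((hθ.sin.const_add ρ).fun_pow 2).const_mul (1 + δ))).const_mul (1 / 2)
  refine h.congr_deriv ?_
  unfold tiltField twistField
  ring

variable {γ δ ρ : ℝ} {θ ψ : ℝ → ℝ}

theorem hasDerivAt_energy_of_isSolution
    (hθ : ∀ τ, HasDerivAt θ (tiltField γ (θ τ) (ψ τ)) τ)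
    (hψ : ∀ τ, HasDerivAt ψ (twistField γ δ ρ (θ τ) (ψ τ)) τ) (τ : ℝ) :
    HasDerivAt (fun t => energy γ δ ρ (θ t) (ψ t)) 0 τ :=
  (hasDerivAt_energy_comp (hθ τ) (hψ τ)).congr_deriv (by ring)

theorem energy_eq_of_isSolution
    (hθ : ∀ τ, HasDerivAt θ (tiltField γ (θ τ) (ψ τ)) τ)
    (hψ : ∀ τ, HasDerivAt ψ (twistField γ δ ρ (θ τ) (ψ τ)) τ) (τ₁ τ₂ : ℝ) :
    energy γ δ ρ (θ τ₁) (ψ τ₁) = energy γ δ ρ (θ τ₂) (ψ τ₂) :=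
  have hE := hasDerivAt_energy_of_isSolution hθ hψ
  is_const_of_deriv_eq_zero (fun τ => (hE τ).differentiableAt) (fun τ => (hE τ).deriv) τ₁ τ₂

theorem energy_zero_zero (γ δ ρ : ℝ) : energy γ δ ρ 0 0 = (1 / 2) * (1 + ρ * (ρ * (1 + δ))) := by
  simp only [energy, sin_zero, cos_zero]
  ring

end AlternateEuler

open AlternateEuler in
theorem alternate_energy_conserved
    (γ δ ρ ρh : ℝ) (hρh : ρh = ρ * (1 + δ)) (θ ψ : ℝ → ℝ)
    (hθ' : ∀ τ, HasDerivAt θ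
      (γ * Real.cos (θ τ) * Real.sin (ψ τ) * Real.cos (ψ τ)) τ)
    (hψ' : ∀ τ, HasDerivAt ψ
      (-(1 + δ) * ρ + Real.sin (θ τ) * (γ * Real.sin (ψ τ) ^ 2 - δ)) τ) :
    (∀ τ₁ τ₂ : ℝ,
      (1 / 2) * ((1 + γ * Real.sin (ψ τ₁) ^ 2) * Real.cos (θ τ₁) ^ 2
          + (1 + δ) * (ρ + Real.sin (θ τ₁)) ^ 2)
      = (1 / 2) * ((1 + γ * Real.sin (ψ τ₂) ^ 2) * Real.cos (θ τ₂) ^ 2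
          + (1 + δ) * (ρ + Real.sin (θ τ₂)) ^ 2))
    ∧ (θ 0 = 0 → ψ 0 = 0 →
        ∀ τ : ℝ,
          (1 / 2) * ((1 + γ * Real.sin (ψ τ) ^ 2) * Real.cos (θ τ) ^ 2
              + (1 + δ) * (ρ + Real.sin (θ τ)) ^ 2)
            = (1 / 2) * (1 + ρ * ρh)) := by
  have hconst := energy_eq_of_isSolution (γ := γ) (δ := δ) (ρ := ρ) hθ' hψ'
  refine ⟨hconst, fun hθ₀ hψ₀ τ => ?_⟩
  have hτ := hconst τ 0
  rw [hθ₀, hψ₀, energy_zero_zero, ← hρh] at hτ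
  exact hτ
end

section
/- Let γ > 0 > δ and ρ̂ > 0, and set z* = ( ρ̂ − √(ρ̂² + γ(γ − δ)) )/(γ − δ). Then z* is the unique root in (−1, 0) of the quadratic (γ − δ)z² − 2ρ̂z − γ = 0; equivalently, for any ρ with ρ̂ = ρ(1+δ), the alternate energy Ẽ = ½( (1+γ)(1 − z²) + (1+δ)(ρ + z)² ) evaluated at sin θ̃ = z*, sin²ψ̃ = 1 equals ½(1 + ρ·ρ̂), the rotor-on energy of the orbit starting at θ̃ = ψ̃ = 0. -/
open Real

theorem highest_point_rotor_on_orbit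
    (γ δ ρh z : ℝ) (hγ : 0 < γ) (hδ : δ < 0) (hρh : 0 < ρh)
    (hz : z = (ρh - Real.sqrt (ρh ^ 2 + γ * (γ - δ))) / (γ - δ)) :
    (z ∈ Set.Ioo (-1 : ℝ) 0
      ∧ (γ - δ) * z ^ 2 - 2 * ρh * z - γ = 0
      ∧ ∀ w ∈ Set.Ioo (-1 : ℝ) 0,
          (γ - δ) * w ^ 2 - 2 * ρh * w - γ = 0 → w = z)
    ∧ ∀ ρ : ℝ, ρh = ρ * (1 + δ) →
        (1 / 2) * ((1 + γ) * (1 - z ^ 2) + (1 + δ) * (ρ + z) ^ 2)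
          = (1 / 2) * (1 + ρ * ρh) := by
  have hγδ : 0 < γ - δ := by linarith
  set s := Real.sqrt (ρh ^ 2 + γ * (γ - δ)) with hs
  have hs0 : 0 ≤ s := Real.sqrt_nonneg _
  have hs2 : s ^ 2 = ρh ^ 2 + γ * (γ - δ) := by
    rw [hs, sq, Real.mul_self_sqrt (by nlinarith)]
  have hsgt : ρh < s := by nlinarith
  have hz' : z * (γ - δ) = ρh - s := by
    rw [hz]; field_simp
  have hquad : (γ - δ) * z ^ 2 - 2 * ρh * z - γ = 0 := by
    have h : (γ - δ) * ((γ - δ) * z ^ 2 - 2 * ρh * z - γ) = 0 := by nlinarith [hz', hs2]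
    have := (mul_eq_zero.mp h)
    rcases this with h1 | h2
    · linarith
    · exact h2
  have hzneg : z < 0 := by nlinarith
  have hslt : s < ρh + (γ - δ) := by nlinarith
  have hzgt : -1 < z := by nlinarith
  refine ⟨⟨⟨hzgt, hzneg⟩, hquad, ?_⟩, ?_⟩
  · intro w hw hwq
    have hfac : (w - z) * ((γ - δ) * (w + z) - 2 * ρh) = 0 := by
      linear_combination hwq - hquad
    rcases mul_eq_zero.mp hfac with h | h
    · linarith [sub_eq_zero.mp h]
    · exfalso
      have hw0 : w < 0 := hw.2
      nlinarith [hz']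
  · intro ρ hρ
    linear_combination (-1/2) * hquad - (z + ρ/2) * hρ
end

section
/- Let m, n ∈ ℝ and let T̂₂, φ₂, P̂₃, Φ₃ ∈ ℝ be the scaled rotor-on transition time, the rotor-on somersault amount, the period of the rotor-off twisting motion, and the somersault advance per twisting period, respectively. Define T̂₁ by the somersault condition 2mπ = 2T̂₁ + 2φ₂ + Φ₃·(n − ½) (so that stage-1 pure somersault, with unit somersault rate in scaled time, contributes φ₁ = T̂₁), and define T̂_tot = 2T̂₁ + 2T̂₂ + P̂₃·(n − ½). Then T̂_tot − 2mπ = 2(T̂₂ − φ₂) + (P̂₃ − Φ₃)·(n − ½), and 2T̂₁ = 2mπ − 2φ₂ − Φ₃·(n − ½); the dive with m somersaults and n twists in total scaled time T̂_tot is possible only when this expression for 2T̂₁ is nonnegative. -/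
open Real

theorem master_equation_general_case
    (m n : ℝ) (T₂ φ₂ P₃ Φ₃ T₁ Ttot : ℝ)
    (hT₁ : 2 * m * Real.pi = 2 * T₁ + 2 * φ₂ + Φ₃ * (n - 1 / 2))
    (hTtot : Ttot = 2 * T₁ + 2 * T₂ + P₃ * (n - 1 / 2)) :
    Ttot - 2 * m * Real.pi = 2 * (T₂ - φ₂) + (P₃ - Φ₃) * (n - 1 / 2)
    ∧ 2 * T₁ = 2 * m * Real.pi - 2 * φ₂ - Φ₃ * (n - 1 / 2)
    ∧ (0 ≤ T₁ ↔
        0 ≤ 2 * m * Real.pi - 2 * φ₂ - Φ₃ * (n - 1 / 2)) := by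
  refine ⟨by rw [hTtot, hT₁]; ring, by rw [hT₁]; ring, ?_⟩
  constructor <;> intro h <;> nlinarith
end
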